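/- Let S = {s, u_1, ..., u_{k-1}} and T = {t, u_1, ..., u_{k-1}} be adjacent bases of a rank-k matroid, and let J = {u ∈ S∩T : t ∈ N(S-u)}. Then the Ollivier–Ricci curvature of the basis exchange walk satisfies κ ≥ min over adjacent pairs S~T of [ -#J/k + 1/k + (1/k)·Σ_{u∈J} (2 + #(N(S-u) ∩ N(T-u))) / max{#N(S-u), #N(T-u)} ]. -/

import Mathlib

open scoped Classical BigOperators

/-- A matroid given by its set of bases: a nonempty antichain of finite
subsets satisfying the basis exchange property. -/
structure FinMatroid (α : Type*) [DecidableEq α] where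
  IsBase : Finset α → Prop
  nonempty : ∃ B, IsBase B
  antichain : ∀ B₁ B₂, IsBase B₁ → IsBase B₂ → B₁ ⊆ B₂ → B₁ = B₂
  exchange : ∀ B₁ B₂, IsBase B₁ → IsBase B₂ → ∀ b₁ ∈ B₁ \ B₂,
      ∃ b₂ ∈ B₂ \ B₁, IsBase (insert b₂ (B₁.erase b₁))

namespace FinMatroid

variable {α : Type*} [Fintype α] [DecidableEq α] (M : FinMatroid α)

/-- `N(B - u)`: the elements `x` such that `B - u + x` is a basis. -/
noncomputable def exNbr (B : Finset α) (u : α) : Finset α :=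
  Finset.univ.filter (fun x => M.IsBase (insert x (B.erase u)))

/-- The bases containing `B - u`, i.e. the possible results of an up-step after
dropping `u` from `B`. -/
noncomputable def up (B : Finset α) (u : α) : Finset (Finset α) :=
  Finset.univ.filter (fun B' => M.IsBase B' ∧ B.erase u ⊆ B')

/-- The transition probability of the basis exchange (down-up) walk:
drop a uniform element `u` of the current basis `S`, then move to a uniform
basis containing `S - u`. -/
noncomputable def step (S B' : Finset α) : ℝ :=
  ∑ u ∈ S, (1 / (S.card : ℝ)) * (if B' ∈ M.up S u then 1 / ((M.up S u).card : ℝ) else 0)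

/-- The metric induced by the basis exchange walk on bases: the graph distance
in the basis exchange graph, which equals `#(S \ T)`. -/
noncomputable def dist (S T : Finset α) : ℝ := ((S \ T).card : ℝ)

/-- `π` is a coupling of the distributions `μ` and `ν` on `Finset α`. -/
def IsCoupling (μ ν : Finset α → ℝ) (π : Finset α → Finset α → ℝ) : Prop :=
  (∀ x y, 0 ≤ π x y) ∧ (∀ x, ∑ y : Finset α, π x y = μ x) ∧
    (∀ y, ∑ x : Finset α, π x y = ν y)

/-- The expected distance under a coupling `π`. -/
noncomputable def cost (π : Finset α → Finset α → ℝ) : ℝ :=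
  ∑ x : Finset α, ∑ y : Finset α, π x y * dist x y

/-- Wasserstein distance between two distributions on bases. -/
noncomputable def W (μ ν : Finset α → ℝ) : ℝ :=
  sInf {c | ∃ π, IsCoupling μ ν π ∧ cost π = c}

/-- The Ollivier–Ricci curvature of the basis exchange walk: the largest `κ`
such that `W(P(S,·), P(T,·)) ≤ (1 - κ) · d(S,T)` for all bases `S`, `T`. -/
noncomputable def curvature : ℝ :=
  sSup {κ : ℝ | ∀ S T, M.IsBase S → M.IsBase T →
    W (M.step S) (M.step T) ≤ (1 - κ) * dist S T}

end FinMatroid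

namespace FinMatroid
variable {α : Type*} [Fintype α] [DecidableEq α] (M : FinMatroid α)

lemma mem_exNbr {B : Finset α} {u x : α} :
    x ∈ M.exNbr B u ↔ M.IsBase (insert x (B.erase u)) := by
  simp [exNbr]

lemma mem_up {B : Finset α} {u : α} {B' : Finset α} :
    B' ∈ M.up B u ↔ M.IsBase B' ∧ B.erase u ⊆ B' := by
  simp [up]

variable {M}

lemma not_mem_erase_of_exNbr {B : Finset α} {u x : α} (hB : M.IsBase B) (hu : u ∈ B)
    (hx : x ∈ M.exNbr B u) : x ∉ B.erase u := by
  intro hxe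
  rw [M.mem_exNbr, Finset.insert_eq_self.2 hxe] at hx
  have := M.antichain _ _ hx hB (Finset.erase_subset _ _)
  exact (Finset.notMem_erase u B) (by rw [this]; exact hu)

lemma self_mem_exNbr {B : Finset α} {u : α} (hB : M.IsBase B) (hu : u ∈ B) :
    u ∈ M.exNbr B u := by
  rw [M.mem_exNbr, Finset.insert_erase hu]; exact hB

lemma injOn_insert_erase {B : Finset α} {u : α} (hB : M.IsBase B) (hu : u ∈ B) :
    Set.InjOn (fun x => insert x (B.erase u)) (M.exNbr B u) := by
  intro x hx y hy hxy
  simp only at hxy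
  have hx' := not_mem_erase_of_exNbr hB hu hx
  have hy' := not_mem_erase_of_exNbr hB hu hy
  have : x ∈ insert y (B.erase u) := hxy ▸ Finset.mem_insert_self x _
  rcases Finset.mem_insert.1 this with h | h
  · exact h
  · exact absurd h hx'

lemma up_eq_image {k : ℕ} (hrank : ∀ B, M.IsBase B → B.card = k) {B : Finset α} {u : α}
    (hB : M.IsBase B) (hu : u ∈ B) :
    M.up B u = (M.exNbr B u).image (fun x => insert x (B.erase u)) := by
  have hk0 : 0 < k := by rw [← hrank B hB]; exact Finset.card_pos.2 ⟨u, hu⟩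
  ext B'
  simp only [mem_up, Finset.mem_image]
  constructor
  · rintro ⟨hB', hsub⟩
    have hcard : (B.erase u).card < B'.card := by
      rw [Finset.card_erase_of_mem hu, hrank B hB, hrank B' hB']
      omega
    obtain ⟨x, hxB', hxe⟩ : ∃ x ∈ B', x ∉ B.erase u := by
      by_contra h
      push_neg at h
      exact absurd (Finset.card_le_card h) (not_le.mpr hcard)
    refine ⟨x, ?_, ?_⟩
    · rw [M.mem_exNbr]
      have : insert x (B.erase u) = B' := by
        apply Finset.eq_of_subset_of_card_le
        · exact Finset.insert_subset hxB' hsub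
        · rw [Finset.card_insert_of_notMem hxe, Finset.card_erase_of_mem hu,
            hrank B hB, hrank B' hB']
          omega
      rw [this]; exact hB'
    · apply Finset.eq_of_subset_of_card_le
      · exact Finset.insert_subset hxB' hsub
      · rw [Finset.card_insert_of_notMem hxe, Finset.card_erase_of_mem hu,
          hrank B hB, hrank B' hB']
        omega
  · rintro ⟨x, hx, rfl⟩
    rw [M.mem_exNbr] at hx
    exact ⟨hx, Finset.subset_insert _ _⟩

lemma card_up {k : ℕ} (hrank : ∀ B, M.IsBase B → B.card = k) {B : Finset α} {u : α}
    (hB : M.IsBase B) (hu : u ∈ B) :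
    (M.up B u).card = (M.exNbr B u).card := by
  rw [up_eq_image hrank hB hu]
  exact Finset.card_image_of_injOn (injOn_insert_erase hB hu)

lemma exNbr_card_pos {B : Finset α} {u : α} (hB : M.IsBase B) (hu : u ∈ B) :
    0 < (M.exNbr B u).card :=
  Finset.card_pos.2 ⟨u, self_mem_exNbr hB hu⟩

lemma step_nonneg (S B' : Finset α) : 0 ≤ M.step S B' := by
  apply Finset.sum_nonneg
  intro u _
  apply mul_nonneg (by positivity)
  split <;> positivity

lemma dist_nonneg (S T : Finset α) : 0 ≤ dist S T := Nat.cast_nonneg _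

lemma dist_self (S : Finset α) : dist S S = 0 := by simp [dist]

lemma dist_triangle (x y z : Finset α) : dist x z ≤ dist x y + dist y z := by
  unfold dist
  rw [← Nat.cast_add]
  exact_mod_cast le_trans (Finset.card_le_card (fun a ha => by
    simp only [Finset.mem_sdiff, Finset.mem_union] at ha ⊢
    by_cases h : a ∈ y
    · exact Or.inr ⟨h, ha.2⟩
    · exact Or.inl ⟨ha.1, h⟩)) (Finset.card_union_le _ _)

lemma cost_nonneg {π : Finset α → Finset α → ℝ} (hπ : ∀ x y, 0 ≤ π x y) : 0 ≤ cost π := by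
  apply Finset.sum_nonneg; intro x _
  apply Finset.sum_nonneg; intro y _
  exact mul_nonneg (hπ x y) (dist_nonneg _ _)

lemma W_le_cost {μ ν : Finset α → ℝ} {π : Finset α → Finset α → ℝ}
    (hπ : IsCoupling μ ν π) : W μ ν ≤ cost π := by
  apply csInf_le
  · refine ⟨0, ?_⟩
    rintro c ⟨π', hπ', rfl⟩
    exact cost_nonneg hπ'.1
  · exact ⟨π, hπ, rfl⟩

lemma W_nonneg (μ ν : Finset α → ℝ) : 0 ≤ W μ ν := by
  rcases Set.eq_empty_or_nonempty {c | ∃ π, IsCoupling μ ν π ∧ cost π = c} with h | h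
  · rw [W, h, Real.sInf_empty]
  · exact Real.sInf_nonneg (by rintro c ⟨π', hπ', rfl⟩; exact cost_nonneg hπ'.1)

lemma diag_coupling (μ : Finset α → ℝ) (hμ : ∀ x, 0 ≤ μ x) :
    IsCoupling μ μ (fun x y => if x = y then μ x else 0) ∧
      cost (fun x y => if x = y then μ x else 0) = 0 := by
  constructor
  · refine ⟨fun x y => ?_, fun x => ?_, fun y => ?_⟩
    · dsimp only; split
      · exact hμ x
      · exact le_refl 0
    · simp
    · simp
  · unfold cost
    apply Finset.sum_eq_zero; intro x _
    apply Finset.sum_eq_zero; intro y _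
    dsimp; split
    · rename_i h; rw [h, dist_self, mul_zero]
    · rw [zero_mul]

end FinMatroid

namespace FinMatroid
variable {α : Type*} [Fintype α] [DecidableEq α] {M : FinMatroid α}

lemma glue (μ ν ρ : Finset α → ℝ) (π₁ π₂ : Finset α → Finset α → ℝ)
    (h₁ : IsCoupling μ ν π₁) (h₂ : IsCoupling ν ρ π₂) :
    ∃ π, IsCoupling μ ρ π ∧ cost π ≤ cost π₁ + cost π₂ := by
  obtain ⟨h₁0, h₁r, h₁c⟩ := h₁
  obtain ⟨h₂0, h₂r, h₂c⟩ := h₂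
  have hν0 : ∀ y, 0 ≤ ν y := fun y => (h₁c y) ▸ Finset.sum_nonneg (fun x _ => h₁0 x y)
  have hπ₁0 : ∀ x y, ν y = 0 → π₁ x y = 0 := by
    intro x y hy
    have := (Finset.sum_eq_zero_iff_of_nonneg (fun x _ => h₁0 x y)).1 ((h₁c y).trans hy)
    exact this x (Finset.mem_univ x)
  have hπ₂0 : ∀ y z, ν y = 0 → π₂ y z = 0 := by
    intro y z hy
    have := (Finset.sum_eq_zero_iff_of_nonneg (fun z _ => h₂0 y z)).1 ((h₂r y).trans hy)
    exact this z (Finset.mem_univ z)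
  refine ⟨fun x z => ∑ y : Finset α, if ν y = 0 then 0 else π₁ x y * π₂ y z / ν y, ⟨?_, ?_, ?_⟩, ?_⟩
  · intro x z
    apply Finset.sum_nonneg; intro y _
    split
    · exact le_refl 0
    · rename_i hy
      exact div_nonneg (mul_nonneg (h₁0 x y) (h₂0 y z)) (hν0 y)
  · intro x
    rw [Finset.sum_comm]
    have : ∀ y : Finset α, (∑ z : Finset α, if ν y = 0 then 0 else π₁ x y * π₂ y z / ν y) = π₁ x y := by
      intro y
      by_cases hy : ν y = 0
      · simp [hy, hπ₁0 x y hy]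
      · simp only [if_neg hy]
        rw [← Finset.sum_div, ← Finset.mul_sum, h₂r y, mul_div_assoc, div_self hy, mul_one]
    rw [Finset.sum_congr rfl (fun y _ => this y), h₁r x]
  · intro z
    have : ∀ y : Finset α, (∑ x : Finset α, if ν y = 0 then 0 else π₁ x y * π₂ y z / ν y) = π₂ y z := by
      intro y
      by_cases hy : ν y = 0
      · simp [hy, hπ₂0 y z hy]
      · simp only [if_neg hy]
        have : ∀ x : Finset α, π₁ x y * π₂ y z / ν y = π₁ x y * (π₂ y z / ν y) := by
          intro x; ring
        rw [Finset.sum_congr rfl (fun x _ => this x), ← Finset.sum_mul, h₁c y,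
          mul_div_assoc']
        field_simp
    rw [Finset.sum_comm, Finset.sum_congr rfl (fun y _ => this y), h₂c z]
  · have key : ∀ x z : Finset α,
        (∑ y : Finset α, if ν y = 0 then 0 else π₁ x y * π₂ y z / ν y) * dist x z ≤
        ∑ y : Finset α, (if ν y = 0 then 0 else π₁ x y * π₂ y z / ν y) * (dist x y + dist y z) := by
      intro x z
      rw [Finset.sum_mul]
      apply Finset.sum_le_sum
      intro y _
      by_cases hy : ν y = 0
      · simp [hy]
      · simp only [if_neg hy]
        have h0 : (0:ℝ) ≤ π₁ x y * π₂ y z / ν y :=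
          div_nonneg (mul_nonneg (h₁0 x y) (h₂0 y z)) (hν0 y)
        exact mul_le_mul_of_nonneg_left (dist_triangle x y z) h0
    calc cost (fun x z => ∑ y : Finset α, if ν y = 0 then 0 else π₁ x y * π₂ y z / ν y)
        ≤ ∑ x : Finset α, ∑ z : Finset α, ∑ y : Finset α,
            (if ν y = 0 then 0 else π₁ x y * π₂ y z / ν y) * (dist x y + dist y z) := by
          apply Finset.sum_le_sum; intro x _
          apply Finset.sum_le_sum; intro z _
          exact key x z
      _ = cost π₁ + cost π₂ := by
          have expand : ∀ x z y : Finset α,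
              (if ν y = 0 then 0 else π₁ x y * π₂ y z / ν y) * (dist x y + dist y z) =
              (if ν y = 0 then 0 else π₁ x y * π₂ y z / ν y) * dist x y +
              (if ν y = 0 then 0 else π₁ x y * π₂ y z / ν y) * dist y z := fun x z y => by ring
          simp_rw [expand, Finset.sum_add_distrib]
          congr 1
          · -- first part = cost π₁
            unfold cost
            apply Finset.sum_congr rfl; intro x _
            rw [Finset.sum_comm]
            apply Finset.sum_congr rfl; intro y _
            by_cases hy : ν y = 0
            · simp [hy, hπ₁0 x y hy]
            · simp only [if_neg hy]
              have : ∀ z : Finset α, π₁ x y * π₂ y z / ν y * dist x y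
                  = (π₁ x y * dist x y / ν y) * π₂ y z := fun z => by ring
              rw [Finset.sum_congr rfl (fun z _ => this z), ← Finset.mul_sum, h₂r y]
              field_simp
          · -- second part = cost π₂
            unfold cost
            have step1 : ∀ x : Finset α, (∑ z : Finset α, ∑ y : Finset α,
                (if ν y = 0 then 0 else π₁ x y * π₂ y z / ν y) * dist y z)
                = ∑ y : Finset α, ∑ z : Finset α,
                (if ν y = 0 then 0 else π₁ x y * π₂ y z / ν y) * dist y z :=
              by intro x; rw [Finset.sum_comm]

            rw [Finset.sum_congr rfl (fun x _ => step1 x), Finset.sum_comm]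
            have : ∀ y : Finset α, (∑ x : Finset α, ∑ z : Finset α,
                (if ν y = 0 then 0 else π₁ x y * π₂ y z / ν y) * dist y z)
                = ∑ z : Finset α, π₂ y z * dist y z := by
              intro y
              by_cases hy : ν y = 0
              · simp [hy, fun z => hπ₂0 y z hy]
              · simp only [if_neg hy]
                rw [Finset.sum_comm]
                apply Finset.sum_congr rfl; intro z _
                have : ∀ x : Finset α, π₁ x y * π₂ y z / ν y * dist y z
                    = π₁ x y * (π₂ y z * dist y z / ν y) := fun x => by ring
                rw [Finset.sum_congr rfl (fun x _ => this x), ← Finset.sum_mul, h₁c y]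
                field_simp
            rw [Finset.sum_congr rfl (fun y _ => this y)]

end FinMatroid

namespace FinMatroid
variable {α : Type*} [Fintype α] [DecidableEq α] {M : FinMatroid α}

lemma key_set_eq {U : Finset α} {s t u : α} (hs : s ∉ U) (ht : t ∉ U) (hu : u ∈ U) :
    insert t ((insert s U).erase u) = insert s ((insert t U).erase u) := by
  have hsu : s ≠ u := fun h => hs (h ▸ hu)
  have htu : t ≠ u := fun h => ht (h ▸ hu)
  rw [Finset.erase_insert_of_ne hsu, Finset.erase_insert_of_ne htu, Finset.insert_comm]

/-- If `t ∉ N(S-u)` then `N(S-u) ⊆ N(T-u)`. -/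
lemma exNbr_subset_of_notJ {U : Finset α} {s t u : α} (hs : s ∉ U) (ht : t ∉ U) (hst : s ≠ t)
    (hS : M.IsBase (insert s U)) (hT : M.IsBase (insert t U)) (hu : u ∈ U)
    (hJ : t ∉ M.exNbr (insert s U) u) :
    M.exNbr (insert s U) u ⊆ M.exNbr (insert t U) u := by
  intro x hx
  have huS : u ∈ insert s U := Finset.mem_insert_of_mem hu
  have huT : u ∈ insert t U := Finset.mem_insert_of_mem hu
  by_cases hxu : x = u
  · subst hxu; exact self_mem_exNbr hT huT
  have hxB : M.IsBase (insert x ((insert s U).erase u)) := (M.mem_exNbr).1 hx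
  have hxe : x ∉ (insert s U).erase u := not_mem_erase_of_exNbr hS huS hx
  -- u ∈ T \ B where B = insert x ((insert s U).erase u)
  have huB : u ∉ insert x ((insert s U).erase u) := by
    intro h
    rcases Finset.mem_insert.1 h with h | h
    · exact hxu h.symm
    · exact (Finset.mem_erase.1 h).1 rfl
  obtain ⟨b₂, hb₂mem, hb₂⟩ := M.exchange _ _ hT hxB u (Finset.mem_sdiff.2 ⟨huT, huB⟩)
  rw [Finset.mem_sdiff] at hb₂mem
  obtain ⟨hb₂B, hb₂T⟩ := hb₂mem
  have hxt : x ≠ t := fun h => hJ (h ▸ hx)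
  -- b₂ ∈ B \ T ⊆ {x, s}
  have : b₂ = x ∨ b₂ = s := by
    rcases Finset.mem_insert.1 hb₂B with h | h
    · exact Or.inl h
    · rcases Finset.mem_insert.1 (Finset.mem_of_mem_erase h) with h' | h'
      · exact Or.inr h'
      · exact absurd (Finset.mem_insert_of_mem h') hb₂T
  rcases this with rfl | rfl
  · exact (M.mem_exNbr).2 hb₂
  · -- b₂ = s : contradiction with hJ
    exfalso
    apply hJ
    rw [M.mem_exNbr, key_set_eq hs ht hu]
    exact hb₂

lemma exNbr_eq_of_notJ {U : Finset α} {s t u : α} (hs : s ∉ U) (ht : t ∉ U) (hst : s ≠ t)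
    (hS : M.IsBase (insert s U)) (hT : M.IsBase (insert t U)) (hu : u ∈ U)
    (hJ : t ∉ M.exNbr (insert s U) u) :
    M.exNbr (insert s U) u = M.exNbr (insert t U) u := by
  have hJ' : s ∉ M.exNbr (insert t U) u := by
    intro h
    apply hJ
    rw [M.mem_exNbr, key_set_eq hs ht hu]
    exact (M.mem_exNbr).1 h
  exact Finset.Subset.antisymm (exNbr_subset_of_notJ hs ht hst hS hT hu hJ)
    (exNbr_subset_of_notJ ht hs hst.symm hT hS hu hJ')

/-- `s` is never in `N(S-u)` for `u ∈ U`. -/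
lemma s_not_mem_exNbr {U : Finset α} {s u : α} (hs : s ∉ U)
    (hS : M.IsBase (insert s U)) (hu : u ∈ U) :
    s ∉ M.exNbr (insert s U) u := by
  intro h
  apply not_mem_erase_of_exNbr hS (Finset.mem_insert_of_mem hu) h
  rw [Finset.mem_erase]
  exact ⟨fun h' => hs (h' ▸ hu), Finset.mem_insert_self s U⟩

end FinMatroid

namespace FinMatroid
variable {α : Type*} [Fintype α] [DecidableEq α] (M : FinMatroid α)

/-- uniform distribution over `up B u`. -/
noncomputable def uu (B : Finset α) (u : α) (B' : Finset α) : ℝ :=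
  if B' ∈ M.up B u then 1 / ((M.up B u).card : ℝ) else 0

noncomputable def mden (U : Finset α) (s t u : α) : ℕ :=
  max (M.exNbr (insert s U) u).card (M.exNbr (insert t U) u).card

noncomputable def KK (U : Finset α) (s t u : α) : Finset α :=
  if t ∈ M.exNbr (insert s U) u
  then insert t (M.exNbr (insert s U) u ∩ M.exNbr (insert t U) u)
  else M.exNbr (insert s U) u ∩ M.exNbr (insert t U) u

noncomputable def MM (U : Finset α) (s t u : α) (B₁ B₂ : Finset α) : ℝ :=
  ∑ x ∈ M.KK U s t u,
    if B₁ = insert x ((insert s U).erase u) ∧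
       B₂ = insert (if x = t then s else x) ((insert t U).erase u)
    then 1 / (M.mden U s t u : ℝ) else 0

noncomputable def rr (U : Finset α) (s t u : α) (B₁ : Finset α) : ℝ :=
  ∑ x ∈ M.KK U s t u,
    if B₁ = insert x ((insert s U).erase u) then 1 / (M.mden U s t u : ℝ) else 0

noncomputable def cc (U : Finset α) (s t u : α) (B₂ : Finset α) : ℝ :=
  ∑ x ∈ M.KK U s t u,
    if B₂ = insert (if x = t then s else x) ((insert t U).erase u)
    then 1 / (M.mden U s t u : ℝ) else 0

noncomputable def RRc (U : Finset α) (s t u : α) : ℝ :=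
  1 - ((M.KK U s t u).card : ℝ) / (M.mden U s t u : ℝ)

noncomputable def RR (U : Finset α) (s t u : α) (B₁ B₂ : Finset α) : ℝ :=
  if M.RRc U s t u = 0 then 0 else
    (M.uu (insert s U) u B₁ - M.rr U s t u B₁) *
      (M.uu (insert t U) u B₂ - M.cc U s t u B₂) / M.RRc U s t u

noncomputable def cpl (U : Finset α) (s t : α) (B₁ B₂ : Finset α) : ℝ :=
  (1 / (((insert s U).card : ℕ) : ℝ)) *
    ((if B₁ = B₂ then M.uu (insert s U) s B₁ else 0) +
      ∑ u ∈ U, (M.MM U s t u B₁ B₂ + M.RR U s t u B₁ B₂))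

variable {M}

section PerU

variable {k : ℕ} (hk : 0 < k) (hrank : ∀ B, M.IsBase B → B.card = k)
  {U : Finset α} {s t u : α} (hs : s ∉ U) (ht : t ∉ U) (hst : s ≠ t)
  (hS : M.IsBase (insert s U)) (hT : M.IsBase (insert t U)) (hu : u ∈ U)

include hs ht hst hS hT hu

lemma KK_subset : M.KK U s t u ⊆ M.exNbr (insert s U) u := by
  rw [KK]
  split
  · rename_i h
    exact Finset.insert_subset h (Finset.inter_subset_left)
  · exact Finset.inter_subset_left

lemma t_not_mem_inter : t ∉ M.exNbr (insert s U) u ∩ M.exNbr (insert t U) u := by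
  intro h
  exact s_not_mem_exNbr ht hT hu (Finset.mem_inter.1 h).2

lemma KK_card : ((M.KK U s t u).card : ℝ) =
    ((M.exNbr (insert s U) u ∩ M.exNbr (insert t U) u).card : ℝ) +
      (if t ∈ M.exNbr (insert s U) u then 1 else 0) := by
  rw [KK]
  split
  · rw [Finset.card_insert_of_notMem (t_not_mem_inter hs ht hst hS hT hu)]
    push_cast; ring
  · simp

lemma KK_card_le : (M.KK U s t u).card ≤ (M.exNbr (insert s U) u).card :=
  Finset.card_le_card (KK_subset hs ht hst hS hT hu)

lemma mden_pos : 0 < M.mden U s t u :=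
  lt_of_lt_of_le (exNbr_card_pos hS (Finset.mem_insert_of_mem hu)) (le_max_left _ _)

lemma RRc_nonneg : 0 ≤ M.RRc U s t u := by
  rw [RRc, sub_nonneg]
  apply div_le_one_of_le₀
  · exact_mod_cast le_trans (KK_card_le hs ht hst hS hT hu) (le_max_left _ _)
  · positivity

lemma sigma_maps_KK : ∀ x ∈ M.KK U s t u,
    (if x = t then s else x) ∈ M.exNbr (insert t U) u := by
  intro x hx
  rw [KK] at hx
  split at hx
  · rename_i htN
    rcases Finset.mem_insert.1 hx with rfl | hx'
    · rw [if_pos rfl, M.mem_exNbr, ← key_set_eq hs ht hu]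
      exact (M.mem_exNbr).1 htN
    · have hxt : x ≠ t := fun h => t_not_mem_inter hs ht hst hS hT hu (h ▸ hx')
      rw [if_neg hxt]
      exact (Finset.mem_inter.1 hx').2
  · have hxt : x ≠ t := fun h => t_not_mem_inter hs ht hst hS hT hu (h ▸ hx)
    rw [if_neg hxt]
    exact (Finset.mem_inter.1 hx).2

lemma sigma_injOn : ∀ x ∈ M.KK U s t u, ∀ y ∈ M.KK U s t u,
    (if x = t then s else x) = (if y = t then s else y) → x = y := by
  have hsK : s ∉ M.KK U s t u := fun h =>
    s_not_mem_exNbr hs hS hu (KK_subset hs ht hst hS hT hu h)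
  intro x hx y hy hxy
  by_cases h1 : x = t <;> by_cases h2 : y = t
  · rw [h1, h2]
  · rw [if_pos h1, if_neg h2] at hxy; exact absurd (hxy ▸ hy) hsK
  · rw [if_neg h1, if_pos h2] at hxy; exact absurd (hxy.symm ▸ hx) hsK
  · rwa [if_neg h1, if_neg h2] at hxy

/-- injectivity of `x ↦ insert x (S.erase u)` on `KK`. -/
lemma A_injOn : ∀ x ∈ M.KK U s t u, ∀ y ∈ M.KK U s t u,
    insert x ((insert s U).erase u) = insert y ((insert s U).erase u) → x = y := by
  intro x hx y hy h
  exact injOn_insert_erase hS (Finset.mem_insert_of_mem hu)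
    (KK_subset hs ht hst hS hT hu hx) (KK_subset hs ht hst hS hT hu hy) h

lemma B_injOn : ∀ x ∈ M.KK U s t u, ∀ y ∈ M.KK U s t u,
    insert (if x = t then s else x) ((insert t U).erase u) =
      insert (if y = t then s else y) ((insert t U).erase u) → x = y := by
  intro x hx y hy h
  apply sigma_injOn hs ht hst hS hT hu x hx y hy
  exact injOn_insert_erase hT (Finset.mem_insert_of_mem hu)
    (sigma_maps_KK hs ht hst hS hT hu x hx) (sigma_maps_KK hs ht hst hS hT hu y hy) h

end PerU

end FinMatroid

namespace FinMatroid
variable {α : Type*} [Fintype α] [DecidableEq α] {M : FinMatroid α}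

section PerU2

variable {k : ℕ} (hk : 0 < k) (hrank : ∀ B, M.IsBase B → B.card = k)
  {U : Finset α} {s t u : α} (hs : s ∉ U) (ht : t ∉ U) (hst : s ≠ t)
  (hS : M.IsBase (insert s U)) (hT : M.IsBase (insert t U)) (hu : u ∈ U)

include hrank hs ht hst hS hT hu

lemma MM_nonneg (B₁ B₂ : Finset α) : 0 ≤ M.MM U s t u B₁ B₂ := by
  apply Finset.sum_nonneg; intro x _
  by_cases h : (B₁ = insert x ((insert s U).erase u) ∧
      B₂ = insert (if x = t then s else x) ((insert t U).erase u))
  · rw [if_pos h]; positivity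
  · rw [if_neg h]

lemma MM_row (B₁ : Finset α) : ∑ B₂ : Finset α, M.MM U s t u B₁ B₂ = M.rr U s t u B₁ := by
  simp only [MM, rr]
  rw [Finset.sum_comm]
  apply Finset.sum_congr rfl
  intro x _
  by_cases h : B₁ = insert x ((insert s U).erase u)
  · simp [h]
  · simp [h]

lemma MM_col (B₂ : Finset α) : ∑ B₁ : Finset α, M.MM U s t u B₁ B₂ = M.cc U s t u B₂ := by
  simp only [MM, cc]
  rw [Finset.sum_comm]
  apply Finset.sum_congr rfl
  intro x _
  by_cases h : B₂ = insert (if x = t then s else x) ((insert t U).erase u)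
  · simp [h]
  · simp [h]

lemma rr_total : ∑ B₁ : Finset α, M.rr U s t u B₁ =
    ((M.KK U s t u).card : ℝ) / (M.mden U s t u : ℝ) := by
  simp only [rr]
  rw [Finset.sum_comm]
  have h1 : ∀ x ∈ M.KK U s t u, (∑ B₁ : Finset α,
      if B₁ = insert x ((insert s U).erase u) then (1:ℝ) / (M.mden U s t u : ℝ) else 0)
      = 1 / (M.mden U s t u : ℝ) := by
    intro x _; simp
  rw [Finset.sum_congr rfl h1, Finset.sum_const, nsmul_eq_mul]
  ring

lemma cc_total : ∑ B₂ : Finset α, M.cc U s t u B₂ =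
    ((M.KK U s t u).card : ℝ) / (M.mden U s t u : ℝ) := by
  simp only [cc]
  rw [Finset.sum_comm]
  have h1 : ∀ x ∈ M.KK U s t u, (∑ B₂ : Finset α,
      if B₂ = insert (if x = t then s else x) ((insert t U).erase u)
      then (1:ℝ) / (M.mden U s t u : ℝ) else 0)
      = 1 / (M.mden U s t u : ℝ) := by
    intro x _; simp
  rw [Finset.sum_congr rfl h1, Finset.sum_const, nsmul_eq_mul]
  ring

lemma uu_nonneg (B B' : Finset α) : 0 ≤ M.uu B u B' := by
  rw [uu]; split <;> positivity

lemma uu_total_S : ∑ B' : Finset α, M.uu (insert s U) u B' = 1 := by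
  have hpos : 0 < (M.up (insert s U) u).card := by
    rw [card_up hrank hS (Finset.mem_insert_of_mem hu)]
    exact exNbr_card_pos hS (Finset.mem_insert_of_mem hu)
  simp only [uu]
  rw [Finset.sum_ite_mem, Finset.univ_inter, Finset.sum_const, nsmul_eq_mul]
  field_simp

lemma uu_total_T : ∑ B' : Finset α, M.uu (insert t U) u B' = 1 := by
  have hpos : 0 < (M.up (insert t U) u).card := by
    rw [card_up hrank hT (Finset.mem_insert_of_mem hu)]
    exact exNbr_card_pos hT (Finset.mem_insert_of_mem hu)
  simp only [uu]
  rw [Finset.sum_ite_mem, Finset.univ_inter, Finset.sum_const, nsmul_eq_mul]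
  field_simp

lemma rr_le_uu (B₁ : Finset α) : M.rr U s t u B₁ ≤ M.uu (insert s U) u B₁ := by
  rw [rr, ← Finset.sum_filter]
  by_cases hne : ((M.KK U s t u).filter (fun x => B₁ = insert x ((insert s U).erase u))).Nonempty
  · obtain ⟨x₀, hx₀⟩ := hne
    rw [Finset.mem_filter] at hx₀
    obtain ⟨hx₀K, hx₀B⟩ := hx₀
    have hcard1 : ((M.KK U s t u).filter
        (fun x => B₁ = insert x ((insert s U).erase u))).card ≤ 1 := by
      rw [Finset.card_le_one]
      intro a ha b hb
      rw [Finset.mem_filter] at ha hb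
      exact A_injOn hs ht hst hS hT hu a ha.1 b hb.1 (ha.2.symm.trans hb.2)
    have hsum : (∑ _x ∈ (M.KK U s t u).filter
        (fun x => B₁ = insert x ((insert s U).erase u)), (1:ℝ) / (M.mden U s t u : ℝ))
        ≤ 1 / (M.mden U s t u : ℝ) := by
      rw [Finset.sum_const, nsmul_eq_mul]
      have h0 : (0:ℝ) ≤ 1 / (M.mden U s t u : ℝ) := by positivity
      calc (((M.KK U s t u).filter
          (fun x => B₁ = insert x ((insert s U).erase u))).card : ℝ) * (1 / (M.mden U s t u : ℝ))
          ≤ 1 * (1 / (M.mden U s t u : ℝ)) := by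
            apply mul_le_mul_of_nonneg_right _ h0
            exact_mod_cast hcard1
        _ = 1 / (M.mden U s t u : ℝ) := one_mul _
    refine le_trans hsum ?_
    -- B₁ ∈ up S u so uu = 1/card(up) = 1/m₁ ≥ 1/m
    have hx₀N : x₀ ∈ M.exNbr (insert s U) u := KK_subset hs ht hst hS hT hu hx₀K
    have hB₁up : B₁ ∈ M.up (insert s U) u := by
      rw [hx₀B, mem_up]
      exact ⟨(M.mem_exNbr).1 hx₀N, Finset.subset_insert _ _⟩
    rw [uu, if_pos hB₁up, card_up hrank hS (Finset.mem_insert_of_mem hu)]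
    apply div_le_div_of_nonneg_left (by norm_num) _ _
    · exact_mod_cast exNbr_card_pos hS (Finset.mem_insert_of_mem hu)
    · rw [mden]; exact_mod_cast le_max_left _ _
  · rw [Finset.not_nonempty_iff_eq_empty] at hne
    rw [hne, Finset.sum_empty]
    exact uu_nonneg hrank hs ht hst hS hT hu _ _

lemma cc_le_uu (B₂ : Finset α) : M.cc U s t u B₂ ≤ M.uu (insert t U) u B₂ := by
  rw [cc, ← Finset.sum_filter]
  by_cases hne : ((M.KK U s t u).filter
      (fun x => B₂ = insert (if x = t then s else x) ((insert t U).erase u))).Nonempty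
  · obtain ⟨x₀, hx₀⟩ := hne
    rw [Finset.mem_filter] at hx₀
    obtain ⟨hx₀K, hx₀B⟩ := hx₀
    have hcard1 : ((M.KK U s t u).filter
        (fun x => B₂ = insert (if x = t then s else x) ((insert t U).erase u))).card ≤ 1 := by
      rw [Finset.card_le_one]
      intro a ha b hb
      rw [Finset.mem_filter] at ha hb
      exact B_injOn hs ht hst hS hT hu a ha.1 b hb.1 (ha.2.symm.trans hb.2)
    have hsum : (∑ _x ∈ (M.KK U s t u).filter
        (fun x => B₂ = insert (if x = t then s else x) ((insert t U).erase u)),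
          (1:ℝ) / (M.mden U s t u : ℝ))
        ≤ 1 / (M.mden U s t u : ℝ) := by
      rw [Finset.sum_const, nsmul_eq_mul]
      have h0 : (0:ℝ) ≤ 1 / (M.mden U s t u : ℝ) := by positivity
      calc (((M.KK U s t u).filter
          (fun x => B₂ = insert (if x = t then s else x) ((insert t U).erase u))).card : ℝ)
            * (1 / (M.mden U s t u : ℝ))
          ≤ 1 * (1 / (M.mden U s t u : ℝ)) := by
            apply mul_le_mul_of_nonneg_right _ h0
            exact_mod_cast hcard1
        _ = 1 / (M.mden U s t u : ℝ) := one_mul _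
    refine le_trans hsum ?_
    have hx₀N : (if x₀ = t then s else x₀) ∈ M.exNbr (insert t U) u :=
      sigma_maps_KK hs ht hst hS hT hu x₀ hx₀K
    have hB₂up : B₂ ∈ M.up (insert t U) u := by
      rw [hx₀B, mem_up]
      exact ⟨(M.mem_exNbr).1 hx₀N, Finset.subset_insert _ _⟩
    rw [uu, if_pos hB₂up, card_up hrank hT (Finset.mem_insert_of_mem hu)]
    apply div_le_div_of_nonneg_left (by norm_num) _ _
    · exact_mod_cast exNbr_card_pos hT (Finset.mem_insert_of_mem hu)
    · rw [mden]; exact_mod_cast le_max_right _ _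
  · rw [Finset.not_nonempty_iff_eq_empty] at hne
    rw [hne, Finset.sum_empty]
    exact uu_nonneg hrank hs ht hst hS hT hu _ _

end PerU2
end FinMatroid

namespace FinMatroid
variable {α : Type*} [Fintype α] [DecidableEq α] {M : FinMatroid α}

section PerU3

variable {k : ℕ} (hrank : ∀ B, M.IsBase B → B.card = k)
  {U : Finset α} {s t u : α} (hs : s ∉ U) (ht : t ∉ U) (hst : s ≠ t)
  (hS : M.IsBase (insert s U)) (hT : M.IsBase (insert t U)) (hu : u ∈ U)

include hrank hs ht hst hS hT hu

lemma uu_eq_rr_of_RRc_zero (h0 : M.RRc U s t u = 0) :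
    ∀ B₁, M.uu (insert s U) u B₁ = M.rr U s t u B₁ := by
  have hsum : ∑ B₁ : Finset α, (M.uu (insert s U) u B₁ - M.rr U s t u B₁) = 0 := by
    rw [Finset.sum_sub_distrib, uu_total_S hrank hs ht hst hS hT hu,
      rr_total hrank hs ht hst hS hT hu]
    rw [RRc] at h0
    linarith
  intro B₁
  have := (Finset.sum_eq_zero_iff_of_nonneg (fun B₁ _ =>
    sub_nonneg.2 (rr_le_uu hrank hs ht hst hS hT hu B₁))).1 hsum B₁ (Finset.mem_univ B₁)
  linarith

lemma uu_eq_cc_of_RRc_zero (h0 : M.RRc U s t u = 0) :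
    ∀ B₂, M.uu (insert t U) u B₂ = M.cc U s t u B₂ := by
  have hsum : ∑ B₂ : Finset α, (M.uu (insert t U) u B₂ - M.cc U s t u B₂) = 0 := by
    rw [Finset.sum_sub_distrib, uu_total_T hrank hs ht hst hS hT hu,
      cc_total hrank hs ht hst hS hT hu]
    rw [RRc] at h0
    linarith
  intro B₂
  have := (Finset.sum_eq_zero_iff_of_nonneg (fun B₂ _ =>
    sub_nonneg.2 (cc_le_uu hrank hs ht hst hS hT hu B₂))).1 hsum B₂ (Finset.mem_univ B₂)
  linarith

lemma RR_nonneg (B₁ B₂ : Finset α) : 0 ≤ M.RR U s t u B₁ B₂ := by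
  rw [RR]
  split
  · exact le_rfl
  · rename_i h0
    have hpos : 0 < M.RRc U s t u :=
      lt_of_le_of_ne (RRc_nonneg hs ht hst hS hT hu) (Ne.symm h0)
    apply div_nonneg _ (le_of_lt hpos)
    exact mul_nonneg (sub_nonneg.2 (rr_le_uu hrank hs ht hst hS hT hu B₁))
      (sub_nonneg.2 (cc_le_uu hrank hs ht hst hS hT hu B₂))

lemma RR_row (B₁ : Finset α) : ∑ B₂ : Finset α, M.RR U s t u B₁ B₂ =
    M.uu (insert s U) u B₁ - M.rr U s t u B₁ := by
  by_cases h0 : M.RRc U s t u = 0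
  · simp only [RR, if_pos h0]
    rw [Finset.sum_const, smul_zero, uu_eq_rr_of_RRc_zero hrank hs ht hst hS hT hu h0 B₁]
    ring
  · simp only [RR, if_neg h0]
    have : ∀ B₂ : Finset α, (M.uu (insert s U) u B₁ - M.rr U s t u B₁) *
        (M.uu (insert t U) u B₂ - M.cc U s t u B₂) / M.RRc U s t u
        = ((M.uu (insert s U) u B₁ - M.rr U s t u B₁) / M.RRc U s t u) *
          (M.uu (insert t U) u B₂ - M.cc U s t u B₂) := fun B₂ => by ring
    rw [Finset.sum_congr rfl (fun B₂ _ => this B₂), ← Finset.mul_sum,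
      Finset.sum_sub_distrib, uu_total_T hrank hs ht hst hS hT hu,
      cc_total hrank hs ht hst hS hT hu]
    have hR : (1:ℝ) - ((M.KK U s t u).card : ℝ) / (M.mden U s t u : ℝ) = M.RRc U s t u := by
      rw [RRc]
    rw [hR, div_mul_cancel₀ _ h0]

lemma RR_col (B₂ : Finset α) : ∑ B₁ : Finset α, M.RR U s t u B₁ B₂ =
    M.uu (insert t U) u B₂ - M.cc U s t u B₂ := by
  by_cases h0 : M.RRc U s t u = 0
  · simp only [RR, if_pos h0]
    rw [Finset.sum_const, smul_zero, uu_eq_cc_of_RRc_zero hrank hs ht hst hS hT hu h0 B₂]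
    ring
  · simp only [RR, if_neg h0]
    have : ∀ B₁ : Finset α, (M.uu (insert s U) u B₁ - M.rr U s t u B₁) *
        (M.uu (insert t U) u B₂ - M.cc U s t u B₂) / M.RRc U s t u
        = (M.uu (insert s U) u B₁ - M.rr U s t u B₁) *
          ((M.uu (insert t U) u B₂ - M.cc U s t u B₂) / M.RRc U s t u) := fun B₁ => by ring
    rw [Finset.sum_congr rfl (fun B₁ _ => this B₁), ← Finset.sum_mul,
      Finset.sum_sub_distrib, uu_total_S hrank hs ht hst hS hT hu,
      rr_total hrank hs ht hst hS hT hu]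
    have hR : (1:ℝ) - ((M.KK U s t u).card : ℝ) / (M.mden U s t u : ℝ) = M.RRc U s t u := by
      rw [RRc]
    rw [hR, mul_comm, div_mul_cancel₀ _ h0]

lemma RR_total : ∑ B₁ : Finset α, ∑ B₂ : Finset α, M.RR U s t u B₁ B₂ = M.RRc U s t u := by
  rw [Finset.sum_congr rfl (fun B₁ _ => RR_row hrank hs ht hst hS hT hu B₁),
    Finset.sum_sub_distrib, uu_total_S hrank hs ht hst hS hT hu,
    rr_total hrank hs ht hst hS hT hu, RRc]

lemma dist_up_le_two {B₁ B₂ : Finset α} (h₁ : B₁ ∈ M.up (insert s U) u)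
    (h₂ : B₂ ∈ M.up (insert t U) u) : dist B₁ B₂ ≤ 2 := by
  rw [mem_up] at h₁ h₂
  have hsu : s ≠ u := fun h => hs (h ▸ hu)
  have htu : t ≠ u := fun h => ht (h ▸ hu)
  have hUsub₁ : U.erase u ⊆ B₁ := by
    refine le_trans ?_ h₁.2
    rw [Finset.erase_insert_of_ne hsu]
    exact Finset.subset_insert _ _
  have hUsub₂ : U.erase u ⊆ B₂ := by
    refine le_trans ?_ h₂.2
    rw [Finset.erase_insert_of_ne htu]
    exact Finset.subset_insert _ _
  have hsub : B₁ \ B₂ ⊆ B₁ \ U.erase u := by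
    exact Finset.sdiff_subset_sdiff (le_refl _) hUsub₂
  have hcard : (B₁ \ U.erase u).card = B₁.card - (U.erase u).card :=
    Finset.card_sdiff_of_subset hUsub₁
  have hB₁k : B₁.card = k := hrank B₁ h₁.1
  have hUk : U.card = k - 1 := by
    have := hrank _ hS
    rw [Finset.card_insert_of_notMem hs] at this
    omega
  have hkpos : 0 < k := by
    rw [← hrank _ hS]
    exact Finset.card_pos.2 ⟨s, Finset.mem_insert_self s U⟩
  have : (B₁ \ B₂).card ≤ 2 := by
    calc (B₁ \ B₂).card ≤ (B₁ \ U.erase u).card := Finset.card_le_card hsub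
      _ = B₁.card - (U.erase u).card := hcard
      _ ≤ 2 := by
        rw [hB₁k, Finset.card_erase_of_mem hu, hUk]
        omega
  rw [dist]
  exact_mod_cast this

lemma KK_erase_t : (M.KK U s t u).erase t =
    M.exNbr (insert s U) u ∩ M.exNbr (insert t U) u := by
  rw [KK]
  split
  · rw [Finset.erase_insert (t_not_mem_inter hs ht hst hS hT hu)]
  · rw [Finset.erase_eq_of_notMem (t_not_mem_inter hs ht hst hS hT hu)]

lemma dist_diag_pair {x : α} (hx : x ∈ M.exNbr (insert s U) u) :
    dist (insert x ((insert s U).erase u)) (insert x ((insert t U).erase u)) = 1 := by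
  have hsu : s ≠ u := fun h => hs (h ▸ hu)
  have htu : t ≠ u := fun h => ht (h ▸ hu)
  have hsx : s ≠ x := fun h => s_not_mem_exNbr hs hS hu (h ▸ hx)
  have hsd : insert x ((insert s U).erase u) \ insert x ((insert t U).erase u) = {s} := by
    rw [Finset.erase_insert_of_ne hsu, Finset.erase_insert_of_ne htu]
    ext z
    simp only [Finset.mem_sdiff, Finset.mem_insert, Finset.mem_erase, Finset.mem_singleton]
    constructor
    · rintro ⟨h1, h2⟩
      push_neg at h2
      rcases h1 with rfl | rfl | h1
      · exact absurd rfl h2.1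
      · rfl
      · exact absurd h1.2 (h2.2.2 h1.1)
    · rintro rfl
      refine ⟨Or.inr (Or.inl rfl), ?_⟩
      push_neg
      refine ⟨hsx, fun h => absurd h hst, fun h h' => hs h'⟩
  rw [dist, hsd, Finset.card_singleton, Nat.cast_one]

lemma dist_ts_pair :
    dist (insert t ((insert s U).erase u)) (insert s ((insert t U).erase u)) = 0 := by
  rw [key_set_eq hs ht hu, dist_self]

lemma MM_cost : ∑ B₁ : Finset α, ∑ B₂ : Finset α, M.MM U s t u B₁ B₂ * dist B₁ B₂ =
    ((M.exNbr (insert s U) u ∩ M.exNbr (insert t U) u).card : ℝ) / (M.mden U s t u : ℝ) := by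
  have collapse : ∀ (a b : Finset α) (v : ℝ),
      (∑ B₁ : Finset α, ∑ B₂ : Finset α, (if B₁ = a ∧ B₂ = b then v else 0) * dist B₁ B₂)
      = v * dist a b := by
    intro a b v
    rw [Finset.sum_eq_single a]
    · rw [Finset.sum_eq_single b]
      · simp
      · intro c _ hc; simp [hc]
      · intro h; exact absurd (Finset.mem_univ b) h
    · intro c _ hc
      apply Finset.sum_eq_zero; intro d _; simp [hc]
    · intro h; exact absurd (Finset.mem_univ a) h
  have swap : (∑ B₁ : Finset α, ∑ B₂ : Finset α, M.MM U s t u B₁ B₂ * dist B₁ B₂)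
      = ∑ x ∈ M.KK U s t u, ∑ B₁ : Finset α, ∑ B₂ : Finset α,
          (if B₁ = insert x ((insert s U).erase u) ∧
            B₂ = insert (if x = t then s else x) ((insert t U).erase u)
          then 1 / (M.mden U s t u : ℝ) else 0) * dist B₁ B₂ := by
    simp only [MM, Finset.sum_mul]
    have h1 : ∀ B₁ : Finset α, (∑ B₂ : Finset α, ∑ x ∈ M.KK U s t u,
        (if B₁ = insert x ((insert s U).erase u) ∧
          B₂ = insert (if x = t then s else x) ((insert t U).erase u)
        then 1 / (M.mden U s t u : ℝ) else 0) * dist B₁ B₂)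
        = ∑ x ∈ M.KK U s t u, ∑ B₂ : Finset α,
        (if B₁ = insert x ((insert s U).erase u) ∧
          B₂ = insert (if x = t then s else x) ((insert t U).erase u)
        then 1 / (M.mden U s t u : ℝ) else 0) * dist B₁ B₂ := by
      intro B₁; rw [Finset.sum_comm]
    rw [Finset.sum_congr rfl (fun B₁ _ => h1 B₁), Finset.sum_comm]
  rw [swap]
  have heval : ∀ x ∈ M.KK U s t u, (∑ B₁ : Finset α, ∑ B₂ : Finset α,
      (if B₁ = insert x ((insert s U).erase u) ∧
        B₂ = insert (if x = t then s else x) ((insert t U).erase u)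
      then 1 / (M.mden U s t u : ℝ) else 0) * dist B₁ B₂)
      = if x = t then 0 else 1 / (M.mden U s t u : ℝ) := by
    intro x hxK
    rw [collapse]
    by_cases hxt : x = t
    · subst hxt
      rw [if_pos rfl, if_pos rfl, dist_ts_pair hrank hs ht hst hS hT hu, mul_zero]
    · rw [if_neg hxt, if_neg hxt]
      have hxI : x ∈ M.exNbr (insert s U) u := KK_subset hs ht hst hS hT hu hxK
      rw [dist_diag_pair hrank hs ht hst hS hT hu hxI, mul_one]
  rw [Finset.sum_congr rfl heval]
  rw [Finset.sum_ite, Finset.sum_const, smul_zero, zero_add, Finset.sum_const, nsmul_eq_mul]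
  have : (M.KK U s t u).filter (fun x => ¬x = t) = (M.KK U s t u).erase t := by
    ext z
    simp only [Finset.mem_filter, Finset.mem_erase]
    tauto
  rw [this, KK_erase_t hrank hs ht hst hS hT hu]
  ring

lemma RR_cost : ∑ B₁ : Finset α, ∑ B₂ : Finset α, M.RR U s t u B₁ B₂ * dist B₁ B₂ ≤
    2 * M.RRc U s t u := by
  have hpt : ∀ B₁ B₂ : Finset α, M.RR U s t u B₁ B₂ * dist B₁ B₂ ≤ 2 * M.RR U s t u B₁ B₂ := by
    intro B₁ B₂
    by_cases hR : M.RR U s t u B₁ B₂ = 0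
    · rw [hR, zero_mul, mul_zero]
    · have hup₁ : B₁ ∈ M.up (insert s U) u := by
        by_contra hB
        apply hR
        rw [RR]
        split
        · rfl
        · have huu : M.uu (insert s U) u B₁ = 0 := by rw [uu, if_neg hB]
          have hrr : M.rr U s t u B₁ = 0 := le_antisymm
            (huu ▸ rr_le_uu hrank hs ht hst hS hT hu B₁)
            (by
              apply Finset.sum_nonneg
              intro x _
              split_ifs <;> positivity)
          rw [huu, hrr, sub_zero]  -- 0 - 0
          ring
      have hup₂ : B₂ ∈ M.up (insert t U) u := by
        by_contra hB
        apply hR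
        rw [RR]
        split
        · rfl
        · have huu : M.uu (insert t U) u B₂ = 0 := by rw [uu, if_neg hB]
          have hcc : M.cc U s t u B₂ = 0 := le_antisymm
            (huu ▸ cc_le_uu hrank hs ht hst hS hT hu B₂)
            (by
              apply Finset.sum_nonneg
              intro x _
              split_ifs <;> positivity)
          rw [huu, hcc, sub_zero]
          ring
      have h2 : dist B₁ B₂ ≤ 2 := dist_up_le_two hrank hs ht hst hS hT hu hup₁ hup₂
      have h0 : 0 ≤ M.RR U s t u B₁ B₂ := RR_nonneg hrank hs ht hst hS hT hu B₁ B₂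
      calc M.RR U s t u B₁ B₂ * dist B₁ B₂ ≤ M.RR U s t u B₁ B₂ * 2 :=
            mul_le_mul_of_nonneg_left h2 h0
        _ = 2 * M.RR U s t u B₁ B₂ := mul_comm _ _
  calc ∑ B₁ : Finset α, ∑ B₂ : Finset α, M.RR U s t u B₁ B₂ * dist B₁ B₂
      ≤ ∑ B₁ : Finset α, ∑ B₂ : Finset α, 2 * M.RR U s t u B₁ B₂ := by
        apply Finset.sum_le_sum; intro B₁ _
        apply Finset.sum_le_sum; intro B₂ _
        exact hpt B₁ B₂
    _ = 2 * M.RRc U s t u := by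
        simp_rw [← Finset.mul_sum]
        rw [RR_total hrank hs ht hst hS hT hu]

end PerU3
end FinMatroid

namespace FinMatroid
variable {α : Type*} [Fintype α] [DecidableEq α] {M : FinMatroid α}

lemma uu_nn (B : Finset α) (u : α) (B' : Finset α) : 0 ≤ M.uu B u B' := by
  rw [uu]; split <;> positivity

section PerU4

variable {k : ℕ} (hrank : ∀ B, M.IsBase B → B.card = k)
  {U : Finset α} {s t u : α} (hs : s ∉ U) (ht : t ∉ U) (hst : s ≠ t)
  (hS : M.IsBase (insert s U)) (hT : M.IsBase (insert t U)) (hu : u ∈ U)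

include hrank hs ht hst hS hT hu

lemma peru_row (B₁ : Finset α) :
    ∑ B₂ : Finset α, (M.MM U s t u B₁ B₂ + M.RR U s t u B₁ B₂) = M.uu (insert s U) u B₁ := by
  rw [Finset.sum_add_distrib, MM_row hrank hs ht hst hS hT hu B₁,
    RR_row hrank hs ht hst hS hT hu B₁]
  ring

lemma peru_col (B₂ : Finset α) :
    ∑ B₁ : Finset α, (M.MM U s t u B₁ B₂ + M.RR U s t u B₁ B₂) = M.uu (insert t U) u B₂ := by
  rw [Finset.sum_add_distrib, MM_col hrank hs ht hst hS hT hu B₂,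
    RR_col hrank hs ht hst hS hT hu B₂]
  ring

lemma peru_cost_J (hJ : t ∈ M.exNbr (insert s U) u) :
    ∑ B₁ : Finset α, ∑ B₂ : Finset α,
      (M.MM U s t u B₁ B₂ + M.RR U s t u B₁ B₂) * dist B₁ B₂ ≤
    2 - (((M.exNbr (insert s U) u ∩ M.exNbr (insert t U) u).card : ℝ) + 2) /
      (M.mden U s t u : ℝ) := by
  have hm : (0:ℝ) < (M.mden U s t u : ℝ) := by
    exact_mod_cast mden_pos hs ht hst hS hT hu
  have hKc : ((M.KK U s t u).card : ℝ) =
      ((M.exNbr (insert s U) u ∩ M.exNbr (insert t U) u).card : ℝ) + 1 := by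
    rw [KK_card hs ht hst hS hT hu, if_pos hJ]
  have hsplit : ∑ B₁ : Finset α, ∑ B₂ : Finset α,
      (M.MM U s t u B₁ B₂ + M.RR U s t u B₁ B₂) * dist B₁ B₂
      = (∑ B₁ : Finset α, ∑ B₂ : Finset α, M.MM U s t u B₁ B₂ * dist B₁ B₂)
        + ∑ B₁ : Finset α, ∑ B₂ : Finset α, M.RR U s t u B₁ B₂ * dist B₁ B₂ := by
    simp_rw [add_mul, Finset.sum_add_distrib]
  rw [hsplit, MM_cost hrank hs ht hst hS hT hu]
  have hRR := RR_cost hrank hs ht hst hS hT hu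
  have hRRc : M.RRc U s t u =
      1 - (((M.exNbr (insert s U) u ∩ M.exNbr (insert t U) u).card : ℝ) + 1) /
        (M.mden U s t u : ℝ) := by
    rw [RRc, hKc]
  rw [hRRc] at hRR
  have key : ((M.exNbr (insert s U) u ∩ M.exNbr (insert t U) u).card : ℝ) / (M.mden U s t u : ℝ)
      + 2 * (1 - (((M.exNbr (insert s U) u ∩ M.exNbr (insert t U) u).card : ℝ) + 1) /
        (M.mden U s t u : ℝ))
      = 2 - (((M.exNbr (insert s U) u ∩ M.exNbr (insert t U) u).card : ℝ) + 2) /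
        (M.mden U s t u : ℝ) := by
    field_simp
    ring
  linarith

lemma peru_cost_notJ (hJ : t ∉ M.exNbr (insert s U) u) :
    ∑ B₁ : Finset α, ∑ B₂ : Finset α,
      (M.MM U s t u B₁ B₂ + M.RR U s t u B₁ B₂) * dist B₁ B₂ ≤ 1 := by
  have heq := exNbr_eq_of_notJ hs ht hst hS hT hu hJ
  have hm : (0:ℝ) < (M.mden U s t u : ℝ) := by
    exact_mod_cast mden_pos hs ht hst hS hT hu
  have hIeq : M.exNbr (insert s U) u ∩ M.exNbr (insert t U) u = M.exNbr (insert s U) u := by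
    rw [← heq, Finset.inter_self]
  have hmeq : M.mden U s t u = (M.exNbr (insert s U) u).card := by
    rw [mden, ← heq, max_self]
  have hRRc0 : M.RRc U s t u = 0 := by
    rw [RRc, KK_card hs ht hst hS hT hu, if_neg hJ, hIeq, hmeq]
    have : ((M.exNbr (insert s U) u).card : ℝ) ≠ 0 := by
      rw [hmeq] at hm; linarith
    field_simp
    ring
  have hRR0 : ∀ B₁ B₂ : Finset α, M.RR U s t u B₁ B₂ = 0 := by
    intro B₁ B₂; rw [RR, if_pos hRRc0]
  have hsplit : ∑ B₁ : Finset α, ∑ B₂ : Finset α,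
      (M.MM U s t u B₁ B₂ + M.RR U s t u B₁ B₂) * dist B₁ B₂
      = (∑ B₁ : Finset α, ∑ B₂ : Finset α, M.MM U s t u B₁ B₂ * dist B₁ B₂)
        + ∑ B₁ : Finset α, ∑ B₂ : Finset α, M.RR U s t u B₁ B₂ * dist B₁ B₂ := by
    simp_rw [add_mul, Finset.sum_add_distrib]
  rw [hsplit, MM_cost hrank hs ht hst hS hT hu]
  have h2 : ∑ B₁ : Finset α, ∑ B₂ : Finset α, M.RR U s t u B₁ B₂ * dist B₁ B₂ = 0 := by
    apply Finset.sum_eq_zero; intro B₁ _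
    apply Finset.sum_eq_zero; intro B₂ _
    rw [hRR0, zero_mul]
  rw [h2, add_zero, hIeq, hmeq]
  rw [hmeq] at hm
  rw [div_self (by linarith)]

end PerU4

lemma exists_coupling_adjacent {k : ℕ} (hk : 0 < k) (hrank : ∀ B, M.IsBase B → B.card = k)
    {U : Finset α} {s t : α} (hs : s ∉ U) (ht : t ∉ U) (hst : s ≠ t)
    (hS : M.IsBase (insert s U)) (hT : M.IsBase (insert t U)) :
    ∃ π, IsCoupling (M.step (insert s U)) (M.step (insert t U)) π ∧
      cost π ≤ 1 - (-(((U.filter (fun u => t ∈ M.exNbr (insert s U) u)).card : ℝ) / (k : ℝ))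
          + 1 / (k : ℝ) + (1 / (k : ℝ)) *
          ∑ u ∈ U.filter (fun u => t ∈ M.exNbr (insert s U) u),
            (2 + (((M.exNbr (insert s U) u) ∩ (M.exNbr (insert t U) u)).card : ℝ)) /
              (max ((M.exNbr (insert s U) u).card : ℝ) ((M.exNbr (insert t U) u).card : ℝ))) := by
  have hScard : (insert s U).card = k := hrank _ hS
  have hTcard : (insert t U).card = k := hrank _ hT
  have hkR : ((k:ℝ)) ≠ 0 := by positivity
  have hUcard : (U.card : ℝ) = (k : ℝ) - 1 := by
    have : U.card + 1 = k := by rw [← Finset.card_insert_of_notMem hs, hScard]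
    have hk1 : U.card = k - 1 := by omega
    rw [hk1]
    have : 1 ≤ k := hk
    push_cast [Nat.cast_sub this]
    ring
  refine ⟨M.cpl U s t, ⟨?_, ?_, ?_⟩, ?_⟩
  · -- nonneg
    intro B₁ B₂
    rw [cpl]
    apply mul_nonneg (by positivity)
    apply add_nonneg
    · split
      · exact uu_nn _ _ _
      · exact le_rfl
    · apply Finset.sum_nonneg
      intro u hu
      exact add_nonneg (MM_nonneg hrank hs ht hst hS hT hu B₁ B₂)
        (RR_nonneg hrank hs ht hst hS hT hu B₁ B₂)
  · -- row marginal = step S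
    intro B₁
    simp only [cpl]
    rw [← Finset.mul_sum, Finset.sum_add_distrib]
    have hdiag : ∑ B₂ : Finset α, (if B₁ = B₂ then M.uu (insert s U) s B₁ else 0)
        = M.uu (insert s U) s B₁ := by simp
    have hswap : ∑ B₂ : Finset α, ∑ u ∈ U, (M.MM U s t u B₁ B₂ + M.RR U s t u B₁ B₂)
        = ∑ u ∈ U, M.uu (insert s U) u B₁ := by
      rw [Finset.sum_comm]
      exact Finset.sum_congr rfl (fun u hu => peru_row hrank hs ht hst hS hT hu B₁)
    rw [hdiag, hswap, step, Finset.sum_insert hs, hScard]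
    simp only [uu]
    rw [mul_add, Finset.mul_sum]
  · -- col marginal = step T
    intro B₂
    simp only [cpl]
    rw [← Finset.mul_sum, Finset.sum_add_distrib]
    have hdiag : ∑ B₁ : Finset α, (if B₁ = B₂ then M.uu (insert s U) s B₁ else 0)
        = M.uu (insert s U) s B₂ := by simp
    have hswap : ∑ B₁ : Finset α, ∑ u ∈ U, (M.MM U s t u B₁ B₂ + M.RR U s t u B₁ B₂)
        = ∑ u ∈ U, M.uu (insert t U) u B₂ := by
      rw [Finset.sum_comm]
      exact Finset.sum_congr rfl (fun u hu => peru_col hrank hs ht hst hS hT hu B₂)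
    have hust : M.uu (insert s U) s B₂ = M.uu (insert t U) t B₂ := by
      have : M.up (insert s U) s = M.up (insert t U) t := by
        simp only [up, Finset.erase_insert hs, Finset.erase_insert ht]
      rw [uu, uu, this]
    rw [hdiag, hswap, hust, step, Finset.sum_insert ht, hTcard]
    simp only [uu]
    rw [hScard, mul_add, Finset.mul_sum]
  · -- cost bound
    have hD : (∑ B₁ : Finset α, ∑ B₂ : Finset α,
        (if B₁ = B₂ then M.uu (insert s U) s B₁ else 0) * dist B₁ B₂) = 0 := by
      apply Finset.sum_eq_zero; intro B₁ _
      apply Finset.sum_eq_zero; intro B₂ _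
      split
      · rename_i h; rw [h, dist_self, mul_zero]
      · rw [zero_mul]
    have hcost : cost (M.cpl U s t) = (1 / (k : ℝ)) *
        ∑ u ∈ U, ∑ B₁ : Finset α, ∑ B₂ : Finset α,
          (M.MM U s t u B₁ B₂ + M.RR U s t u B₁ B₂) * dist B₁ B₂ := by
      rw [cost]
      have hptw : ∀ B₁ B₂ : Finset α, M.cpl U s t B₁ B₂ * dist B₁ B₂
          = (1 / (k : ℝ)) *
            ((if B₁ = B₂ then M.uu (insert s U) s B₁ else 0) * dist B₁ B₂ +
              ∑ u ∈ U, (M.MM U s t u B₁ B₂ + M.RR U s t u B₁ B₂) * dist B₁ B₂) := by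
        intro B₁ B₂
        rw [cpl, hScard, mul_assoc, add_mul, Finset.sum_mul]
      simp_rw [hptw, ← Finset.mul_sum]
      congr 1
      have hsplit2 : ∀ B₁ : Finset α, (∑ B₂ : Finset α,
          ((if B₁ = B₂ then M.uu (insert s U) s B₁ else 0) * dist B₁ B₂ +
            ∑ u ∈ U, (M.MM U s t u B₁ B₂ + M.RR U s t u B₁ B₂) * dist B₁ B₂))
          = (∑ B₂ : Finset α, (if B₁ = B₂ then M.uu (insert s U) s B₁ else 0) * dist B₁ B₂)
            + ∑ u ∈ U, ∑ B₂ : Finset α,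
                (M.MM U s t u B₁ B₂ + M.RR U s t u B₁ B₂) * dist B₁ B₂ := by
        intro B₁
        rw [Finset.sum_add_distrib, Finset.sum_comm]
      rw [Finset.sum_congr rfl (fun B₁ _ => hsplit2 B₁), Finset.sum_add_distrib, hD, zero_add,
        Finset.sum_comm]
    rw [hcost]
    have hmax : ∀ u ∈ U.filter (fun u => t ∈ M.exNbr (insert s U) u),
        (2 + (((M.exNbr (insert s U) u) ∩ (M.exNbr (insert t U) u)).card : ℝ)) /
          (max ((M.exNbr (insert s U) u).card : ℝ) ((M.exNbr (insert t U) u).card : ℝ))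
        = (2 + (((M.exNbr (insert s U) u) ∩ (M.exNbr (insert t U) u)).card : ℝ)) /
          (M.mden U s t u : ℝ) := by
      intro u _
      rw [mden]
      push_cast [Nat.cast_max]
      ring_nf
    rw [Finset.sum_congr rfl hmax]
    -- split the sum over U into J and not J
    have hsplitU := Finset.sum_filter_add_sum_filter_not U
      (fun u => t ∈ M.exNbr (insert s U) u)
      (fun u => ∑ B₁ : Finset α, ∑ B₂ : Finset α,
        (M.MM U s t u B₁ B₂ + M.RR U s t u B₁ B₂) * dist B₁ B₂)
    have hboundJ : ∑ u ∈ U.filter (fun u => t ∈ M.exNbr (insert s U) u),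
        (∑ B₁ : Finset α, ∑ B₂ : Finset α,
          (M.MM U s t u B₁ B₂ + M.RR U s t u B₁ B₂) * dist B₁ B₂)
        ≤ ∑ u ∈ U.filter (fun u => t ∈ M.exNbr (insert s U) u),
          (2 - (2 + (((M.exNbr (insert s U) u) ∩ (M.exNbr (insert t U) u)).card : ℝ)) /
            (M.mden U s t u : ℝ)) := by
      apply Finset.sum_le_sum
      intro u hu
      rw [Finset.mem_filter] at hu
      have := peru_cost_J hrank hs ht hst hS hT hu.1 hu.2
      have harith : 2 - ((((M.exNbr (insert s U) u) ∩ (M.exNbr (insert t U) u)).card : ℝ) + 2) /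
            (M.mden U s t u : ℝ)
          = 2 - (2 + (((M.exNbr (insert s U) u) ∩ (M.exNbr (insert t U) u)).card : ℝ)) /
            (M.mden U s t u : ℝ) := by ring_nf
      linarith [this, harith.le, harith.ge]
    have hboundN : ∑ u ∈ U.filter (fun u => ¬ t ∈ M.exNbr (insert s U) u),
        (∑ B₁ : Finset α, ∑ B₂ : Finset α,
          (M.MM U s t u B₁ B₂ + M.RR U s t u B₁ B₂) * dist B₁ B₂)
        ≤ ((U.filter (fun u => ¬ t ∈ M.exNbr (insert s U) u)).card : ℝ) := by
      calc _ ≤ ∑ _u ∈ U.filter (fun u => ¬ t ∈ M.exNbr (insert s U) u), (1:ℝ) := by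
            apply Finset.sum_le_sum
            intro u hu
            rw [Finset.mem_filter] at hu
            exact peru_cost_notJ hrank hs ht hst hS hT hu.1 hu.2
        _ = _ := by rw [Finset.sum_const, nsmul_eq_mul, mul_one]
    have hcards : ((U.filter (fun u => t ∈ M.exNbr (insert s U) u)).card : ℝ) +
        ((U.filter (fun u => ¬ t ∈ M.exNbr (insert s U) u)).card : ℝ) = (U.card : ℝ) := by
      rw [← Nat.cast_add]
      congr 1
      exact Finset.card_filter_add_card_filter_not _
    have hsum2 : ∑ u ∈ U.filter (fun u => t ∈ M.exNbr (insert s U) u),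
        (2 - (2 + (((M.exNbr (insert s U) u) ∩ (M.exNbr (insert t U) u)).card : ℝ)) /
          (M.mden U s t u : ℝ))
        = 2 * ((U.filter (fun u => t ∈ M.exNbr (insert s U) u)).card : ℝ)
          - ∑ u ∈ U.filter (fun u => t ∈ M.exNbr (insert s U) u),
            (2 + (((M.exNbr (insert s U) u) ∩ (M.exNbr (insert t U) u)).card : ℝ)) /
              (M.mden U s t u : ℝ) := by
      rw [Finset.sum_sub_distrib, Finset.sum_const, nsmul_eq_mul]
      ring
    have hkpos : (0:ℝ) < (k:ℝ) := by exact_mod_cast hk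
    have htotal : ∑ u ∈ U, ∑ B₁ : Finset α, ∑ B₂ : Finset α,
        (M.MM U s t u B₁ B₂ + M.RR U s t u B₁ B₂) * dist B₁ B₂
        ≤ 2 * ((U.filter (fun u => t ∈ M.exNbr (insert s U) u)).card : ℝ)
          - (∑ u ∈ U.filter (fun u => t ∈ M.exNbr (insert s U) u),
            (2 + (((M.exNbr (insert s U) u) ∩ (M.exNbr (insert t U) u)).card : ℝ)) /
              (M.mden U s t u : ℝ))
          + ((U.card : ℝ) - ((U.filter (fun u => t ∈ M.exNbr (insert s U) u)).card : ℝ)) := by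
      rw [← hsplitU]
      push_cast
      linarith [hboundJ, hboundN, hsum2, hcards]
    have hmono : (1 / (k:ℝ)) * (∑ u ∈ U, ∑ B₁ : Finset α, ∑ B₂ : Finset α,
        (M.MM U s t u B₁ B₂ + M.RR U s t u B₁ B₂) * dist B₁ B₂)
        ≤ (1 / (k:ℝ)) * (2 * ((U.filter (fun u => t ∈ M.exNbr (insert s U) u)).card : ℝ)
          - (∑ u ∈ U.filter (fun u => t ∈ M.exNbr (insert s U) u),
            (2 + (((M.exNbr (insert s U) u) ∩ (M.exNbr (insert t U) u)).card : ℝ)) /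
              (M.mden U s t u : ℝ))
          + ((U.card : ℝ) - ((U.filter (fun u => t ∈ M.exNbr (insert s U) u)).card : ℝ))) :=
      mul_le_mul_of_nonneg_left htotal (by positivity)
    refine le_trans hmono (le_of_eq ?_)
    rw [hUcard]
    field_simp
    ring

end FinMatroid
-- temp

namespace FinMatroid
variable {α : Type*} [Fintype α] [DecidableEq α] {M : FinMatroid α}

lemma exists_coupling_all {k : ℕ} (hk : 0 < k) (hrank : ∀ B, M.IsBase B → B.card = k)
    (κ₀ : ℝ) (hκ : ∀ (U : Finset α) (s t : α), s ∉ U → t ∉ U → s ≠ t →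
      M.IsBase (insert s U) → M.IsBase (insert t U) →
      κ₀ ≤ -(((U.filter (fun u => t ∈ M.exNbr (insert s U) u)).card : ℝ) / (k : ℝ))
          + 1 / (k : ℝ) + (1 / (k : ℝ)) *
          ∑ u ∈ U.filter (fun u => t ∈ M.exNbr (insert s U) u),
            (2 + (((M.exNbr (insert s U) u) ∩ (M.exNbr (insert t U) u)).card : ℝ)) /
              (max ((M.exNbr (insert s U) u).card : ℝ) ((M.exNbr (insert t U) u).card : ℝ))) :
    ∀ (n : ℕ) (S T : Finset α), M.IsBase S → M.IsBase T → (S \ T).card = n →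
      ∃ π, IsCoupling (M.step S) (M.step T) π ∧ cost π ≤ (1 - κ₀) * dist S T := by
  intro n
  induction n with
  | zero =>
    intro S T hS hT hd
    have hST : S = T := by
      apply Finset.eq_of_subset_of_card_le
      · rw [← Finset.sdiff_eq_empty_iff_subset]
        exact Finset.card_eq_zero.1 hd
      · rw [hrank S hS, hrank T hT]
    subst hST
    obtain ⟨hcpl, hc⟩ := diag_coupling (M.step S) (M.step_nonneg S)
    refine ⟨_, hcpl, ?_⟩
    rw [hc, dist, Finset.sdiff_self, Finset.card_empty, Nat.cast_zero, mul_zero]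
  | succ n ih =>
    intro S T hS hT hd
    have hne : (S \ T).Nonempty := Finset.card_pos.1 (by omega)
    obtain ⟨s₁, hs₁⟩ := hne
    obtain ⟨t₁, ht₁mem, hbase⟩ := M.exchange S T hS hT s₁ hs₁
    rw [Finset.mem_sdiff] at hs₁ ht₁mem
    obtain ⟨hs₁S, hs₁T⟩ := hs₁
    obtain ⟨ht₁T, ht₁S⟩ := ht₁mem
    set U := S.erase s₁ with hUdef
    have hs : s₁ ∉ U := Finset.notMem_erase _ _
    have ht : t₁ ∉ U := fun h => ht₁S (Finset.mem_of_mem_erase h)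
    have hst : s₁ ≠ t₁ := fun h => ht₁S (h ▸ hs₁S)
    have hSeq : insert s₁ U = S := Finset.insert_erase hs₁S
    have hS' : M.IsBase (insert s₁ U) := hSeq ▸ hS
    have hT' : M.IsBase (insert t₁ U) := hbase
    obtain ⟨π₁, hπ₁, hc₁⟩ := exists_coupling_adjacent hk hrank hs ht hst hS' hT'
    have hc₁' : cost π₁ ≤ 1 - κ₀ := by
      have := hκ U s₁ t₁ hs ht hst hS' hT'
      linarith
    -- distance from insert t₁ U to T is n
    have hsd : insert t₁ U \ T = (S \ T).erase s₁ := by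
      ext z
      simp only [Finset.mem_sdiff, Finset.mem_insert, Finset.mem_erase, hUdef]
      constructor
      · rintro ⟨h1, h2⟩
        rcases h1 with rfl | h1
        · exact absurd ht₁T h2
        · exact ⟨h1.1, h1.2, h2⟩
      · rintro ⟨h1, h2, h3⟩
        exact ⟨Or.inr ⟨h1, h2⟩, h3⟩
    have hd' : (insert t₁ U \ T).card = n := by
      rw [hsd, Finset.card_erase_of_mem (Finset.mem_sdiff.2 ⟨hs₁S, hs₁T⟩), hd]
      omega
    obtain ⟨π₂, hπ₂, hc₂⟩ := ih (insert t₁ U) T hT' hT hd'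
    rw [hSeq] at hπ₁
    obtain ⟨π, hπ, hcglue⟩ := glue (M.step S) (M.step (insert t₁ U)) (M.step T) π₁ π₂ hπ₁ hπ₂
    refine ⟨π, hπ, ?_⟩
    have hdist : dist S T = (n:ℝ) + 1 := by
      rw [dist, hd]; push_cast; ring
    have hdist' : dist (insert t₁ U) T = (n:ℝ) := by rw [dist, hd']
    rw [hdist]
    rw [hdist'] at hc₂
    have h1κ : (0:ℝ) ≤ 1 - κ₀ := by
      -- from the coupling cost: cost π₁ ≥ 0 so 1 - κ₀ ≥ 0
      have := cost_nonneg hπ₁.1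
      linarith
    nlinarith [hcglue, hc₁', hc₂]

end FinMatroid

/-- Corollary to Theorem 1: the Ollivier–Ricci curvature of the basis exchange
walk of a rank-`k` matroid is at least the minimum, over adjacent bases
`S = U + s ~ T = U + t` with `J = {u ∈ U : t ∈ N(S-u)}`, of
`-#J/k + 1/k + (1/k) Σ_{u ∈ J} (2 + #(N(S-u) ∩ N(T-u))) / max(#N(S-u), #N(T-u))`. -/
theorem stmt19 {α : Type*} [Fintype α] [DecidableEq α] (M : FinMatroid α)
    (k : ℕ) (hk : 0 < k) (hrank : ∀ B, M.IsBase B → B.card = k) :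
    M.curvature ≥ sInf {x : ℝ | ∃ (U : Finset α) (s t : α), s ∉ U ∧ t ∉ U ∧ s ≠ t ∧
      M.IsBase (insert s U) ∧ M.IsBase (insert t U) ∧
      x = -(((U.filter (fun u => t ∈ M.exNbr (insert s U) u)).card : ℝ) / (k : ℝ))
          + 1 / (k : ℝ) + (1 / (k : ℝ)) *
          ∑ u ∈ U.filter (fun u => t ∈ M.exNbr (insert s U) u),
            (2 + (((M.exNbr (insert s U) u) ∩ (M.exNbr (insert t U) u)).card : ℝ)) /
              (max ((M.exNbr (insert s U) u).card : ℝ) ((M.exNbr (insert t U) u).card : ℝ))} := by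
  classical
  set P := {x : ℝ | ∃ (U : Finset α) (s t : α), s ∉ U ∧ t ∉ U ∧ s ≠ t ∧
      M.IsBase (insert s U) ∧ M.IsBase (insert t U) ∧
      x = -(((U.filter (fun u => t ∈ M.exNbr (insert s U) u)).card : ℝ) / (k : ℝ))
          + 1 / (k : ℝ) + (1 / (k : ℝ)) *
          ∑ u ∈ U.filter (fun u => t ∈ M.exNbr (insert s U) u),
            (2 + (((M.exNbr (insert s U) u) ∩ (M.exNbr (insert t U) u)).card : ℝ)) /
              (max ((M.exNbr (insert s U) u).card : ℝ) ((M.exNbr (insert t U) u).card : ℝ))}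
    with hPdef
  have hkpos : (0:ℝ) < (k:ℝ) := by exact_mod_cast hk
  have hbddP : BddBelow P := by
    refine ⟨-1, ?_⟩
    rintro x ⟨U, s, t, hs, ht, hst, hS, hT, rfl⟩
    have hJle : ((U.filter (fun u => t ∈ M.exNbr (insert s U) u)).card : ℝ) ≤ (k:ℝ) := by
      have h1 : (U.filter (fun u => t ∈ M.exNbr (insert s U) u)).card ≤ U.card :=
        Finset.card_le_card (Finset.filter_subset _ _)
      have h2 : U.card ≤ (insert s U).card := Finset.card_le_card (Finset.subset_insert _ _)
      have h3 := hrank _ hS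
      exact_mod_cast le_trans h1 (h3 ▸ h2)
    have hsumnn : (0:ℝ) ≤ ∑ u ∈ U.filter (fun u => t ∈ M.exNbr (insert s U) u),
        (2 + (((M.exNbr (insert s U) u) ∩ (M.exNbr (insert t U) u)).card : ℝ)) /
          (max ((M.exNbr (insert s U) u).card : ℝ) ((M.exNbr (insert t U) u).card : ℝ)) := by
      apply Finset.sum_nonneg
      intro u _
      apply div_nonneg
      · positivity
      · exact le_trans (Nat.cast_nonneg _) (le_max_left _ _)
    have h4 : ((U.filter (fun u => t ∈ M.exNbr (insert s U) u)).card : ℝ) / (k:ℝ) ≤ 1 := by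
      rw [div_le_one hkpos]; exact hJle
    have h5 : (0:ℝ) ≤ 1/(k:ℝ) := by positivity
    have h6 : (0:ℝ) ≤ (1/(k:ℝ)) * ∑ u ∈ U.filter (fun u => t ∈ M.exNbr (insert s U) u),
        (2 + (((M.exNbr (insert s U) u) ∩ (M.exNbr (insert t U) u)).card : ℝ)) /
          (max ((M.exNbr (insert s U) u).card : ℝ) ((M.exNbr (insert t U) u).card : ℝ)) :=
      mul_nonneg h5 hsumnn
    linarith
  by_cases hone : ∀ B₁ B₂, M.IsBase B₁ → M.IsBase B₂ → B₁ = B₂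
  · -- single basis: P is empty and curvature set is everything
    have hPempty : P = ∅ := by
      rw [Set.eq_empty_iff_forall_notMem]
      rintro x ⟨U, s, t, hs, ht, hst, hS, hT, -⟩
      have := hone _ _ hS hT
      have htmem : t ∈ insert s U := this ▸ Finset.mem_insert_self t U
      rcases Finset.mem_insert.1 htmem with h | h
      · exact hst h.symm
      · exact ht h
    rw [hPempty, Real.sInf_empty]
    have hK : {κ : ℝ | ∀ S T, M.IsBase S → M.IsBase T →
        FinMatroid.W (M.step S) (M.step T) ≤ (1 - κ) * FinMatroid.dist S T} = Set.univ := by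
      rw [Set.eq_univ_iff_forall]
      intro κ S T hS hT
      have hST : S = T := hone _ _ hS hT
      subst hST
      obtain ⟨hcpl, hc⟩ := FinMatroid.diag_coupling (M.step S) (M.step_nonneg S)
      have hW := FinMatroid.W_le_cost hcpl
      rw [hc] at hW
      rw [FinMatroid.dist_self, mul_zero]
      exact hW
    rw [FinMatroid.curvature, hK]
    rw [ge_iff_le]
    have : sSup (Set.univ : Set ℝ) = 0 := by
      apply Real.sSup_of_not_bddAbove
      intro ⟨b, hb⟩
      have := hb (Set.mem_univ (b+1))
      linarith
    rw [this]
  · -- at least two bases: there is an adjacent pair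
    push_neg at hone
    obtain ⟨B₁, B₂, hB₁, hB₂, hB12⟩ := hone
    have hne : (B₁ \ B₂).Nonempty := by
      rw [Finset.sdiff_nonempty]
      intro hsub
      exact hB12 (M.antichain _ _ hB₁ hB₂ hsub)
    obtain ⟨b₁, hb₁⟩ := hne
    obtain ⟨b₂, hb₂mem, hb₂base⟩ := M.exchange B₁ B₂ hB₁ hB₂ b₁ hb₁
    rw [Finset.mem_sdiff] at hb₁ hb₂mem
    set U₀ := B₁.erase b₁ with hU₀
    have hs₀ : b₁ ∉ U₀ := Finset.notMem_erase _ _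
    have ht₀ : b₂ ∉ U₀ := fun h => hb₂mem.2 (Finset.mem_of_mem_erase h)
    have hst₀ : b₁ ≠ b₂ := fun h => hb₂mem.2 (h ▸ hb₁.1)
    have hS₀ : M.IsBase (insert b₁ U₀) := by rw [hU₀, Finset.insert_erase hb₁.1]; exact hB₁
    have hT₀ : M.IsBase (insert b₂ U₀) := hb₂base
    -- κ₀ ∈ K
    have hκmem : ∀ S T, M.IsBase S → M.IsBase T →
        FinMatroid.W (M.step S) (M.step T) ≤ (1 - sInf P) * FinMatroid.dist S T := by
      intro S T hS hT
      have hκ : ∀ (U : Finset α) (s t : α), s ∉ U → t ∉ U → s ≠ t →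
          M.IsBase (insert s U) → M.IsBase (insert t U) →
          sInf P ≤ -(((U.filter (fun u => t ∈ M.exNbr (insert s U) u)).card : ℝ) / (k : ℝ))
            + 1 / (k : ℝ) + (1 / (k : ℝ)) *
            ∑ u ∈ U.filter (fun u => t ∈ M.exNbr (insert s U) u),
              (2 + (((M.exNbr (insert s U) u) ∩ (M.exNbr (insert t U) u)).card : ℝ)) /
                (max ((M.exNbr (insert s U) u).card : ℝ)
                  ((M.exNbr (insert t U) u).card : ℝ)) := by
        intro U s t hs ht hst hS' hT'
        exact csInf_le hbddP ⟨U, s, t, hs, ht, hst, hS', hT', rfl⟩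
      obtain ⟨π, hπ, hc⟩ := FinMatroid.exists_coupling_all hk hrank (sInf P) hκ
        ((S \ T).card) S T hS hT rfl
      exact le_trans (FinMatroid.W_le_cost hπ) hc
    -- K is bounded above by 1
    have hbddK : BddAbove {κ : ℝ | ∀ S T, M.IsBase S → M.IsBase T →
        FinMatroid.W (M.step S) (M.step T) ≤ (1 - κ) * FinMatroid.dist S T} := by
      refine ⟨1, ?_⟩
      intro κ hκ
      have h := hκ (insert b₁ U₀) (insert b₂ U₀) hS₀ hT₀
      have hW := FinMatroid.W_nonneg (M.step (insert b₁ U₀)) (M.step (insert b₂ U₀))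
      have hd : (0:ℝ) < FinMatroid.dist (insert b₁ U₀) (insert b₂ U₀) := by
        rw [FinMatroid.dist]
        have : b₁ ∈ insert b₁ U₀ \ insert b₂ U₀ := by
          rw [Finset.mem_sdiff]
          refine ⟨Finset.mem_insert_self _ _, ?_⟩
          intro h'
          rcases Finset.mem_insert.1 h' with h'' | h''
          · exact hst₀ h''
          · exact hs₀ h''
        have hpos : 0 < (insert b₁ U₀ \ insert b₂ U₀).card := Finset.card_pos.2 ⟨b₁, this⟩
        exact_mod_cast hpos
      by_contra hκ1
      push_neg at hκ1
      have : (1 - κ) * FinMatroid.dist (insert b₁ U₀) (insert b₂ U₀) < 0 :=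
        mul_neg_of_neg_of_pos (by linarith) hd
      linarith
    rw [FinMatroid.curvature, ge_iff_le]
    exact le_csSup hbddK hκmem
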